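/- arXiv:1111.4600 — 2 statements merged into one kernel-verified Lean document; each statement's English description precedes it below -/
import Mathlib

section
/- For every nontrivial strongly connected edge-weighted graph G, the rate ρ(G) (the supremum of w_*(γ)/ℓ(γ) over all nonempty closed paths γ) equals the maximum of w_*(γ)/ℓ(γ) over all nonempty elementary closed paths γ. In particular, there exists an elementary critical closed path in G. -/
namespace Transients

variable {V : Type*}

/-- A walk of length `n` in the graph with edge relation `E`, given by its node
sequence `p 0, p 1, …, p n`. -/
def IsWalk (E : V → V → Prop) (n : ℕ) (p : ℕ → V) : Prop :=
  ∀ k, k < n → E (p k) (p (k + 1))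

/-- A closed walk: start node equals end node. -/
def IsClosedWalk (E : V → V → Prop) (n : ℕ) (p : ℕ → V) : Prop :=
  IsWalk E n p ∧ p 0 = p n

/-- A nonempty elementary closed walk: closed, and no node repeats except start = end. -/
def IsElemClosedWalk (E : V → V → Prop) (n : ℕ) (p : ℕ → V) : Prop :=
  0 < n ∧ IsClosedWalk E n p ∧ ∀ k l, k < n → l < n → p k = p l → k = l

/-- A simple walk: no node is visited twice. -/
def IsSimpleWalk (E : V → V → Prop) (n : ℕ) (p : ℕ → V) : Prop :=
  IsWalk E n p ∧ ∀ k l, k ≤ n → l ≤ n → p k = p l → k = l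

def StronglyConnected (E : V → V → Prop) : Prop :=
  ∀ i j : V, ∃ n p, IsWalk E n p ∧ p 0 = i ∧ p n = j

def NontrivialGraph (E : V → V → Prop) : Prop := ∃ i j, E i j

/-- The weight `w_*` of a walk in an edge-weighted graph. -/
noncomputable def walkWeight (w : V → V → ℝ) (n : ℕ) (p : ℕ → V) : ℝ :=
  ∑ k ∈ Finset.range n, w (p k) (p (k + 1))

/-- The rate ρ(G): supremum of `w_*(γ)/ℓ(γ)` over nonempty closed walks γ. -/
noncomputable def rate (E : V → V → Prop) (w : V → V → ℝ) : ℝ :=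
  sSup {x : ℝ | ∃ n p, 0 < n ∧ IsClosedWalk E n p ∧ x = walkWeight w n p / n}

/-- A critical closed walk: nonempty, closed, and its weight is ρ(G) times its length. -/
def IsCriticalWalk (E : V → V → Prop) (w : V → V → ℝ) (n : ℕ) (p : ℕ → V) : Prop :=
  0 < n ∧ IsClosedWalk E n p ∧ walkWeight w n p = rate E w * n

/-- A critical node: lies on some critical closed walk. -/
def CriticalNode (E : V → V → Prop) (w : V → V → ℝ) (i : V) : Prop :=
  ∃ n p k, IsCriticalWalk E w n p ∧ k ≤ n ∧ p k = i

/-- A critical edge: lies on some critical closed walk. -/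
def CriticalEdge (E : V → V → Prop) (w : V → V → ℝ) (i j : V) : Prop :=
  ∃ n p k, IsCriticalWalk E w n p ∧ k < n ∧ p k = i ∧ p (k + 1) = j

/-- The non-critical rate ρ_nc(G): supremum of mean weights of nonempty closed walks
containing no critical node. -/
noncomputable def ncRate (E : V → V → Prop) (w : V → V → ℝ) : ℝ :=
  sSup {x : ℝ | ∃ n p, 0 < n ∧ IsClosedWalk E n p ∧
    (∀ k, k ≤ n → ¬ CriticalNode E w (p k)) ∧ x = walkWeight w n p / n}

/-- Δ(G), the maximum edge weight. -/
noncomputable def maxWeight (E : V → V → Prop) (w : V → V → ℝ) : ℝ :=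
  sSup {x : ℝ | ∃ i j, E i j ∧ x = w i j}

/-- δ(G), the minimum edge weight. -/
noncomputable def minWeight (E : V → V → Prop) (w : V → V → ℝ) : ℝ :=
  sInf {x : ℝ | ∃ i j, E i j ∧ x = w i j}

open Classical in
/-- Δ_nc(G), the maximum weight of an edge joining two non-critical nodes
(ρ(G) if there is no such edge). -/
noncomputable def maxNcWeight (E : V → V → Prop) (w : V → V → ℝ) : ℝ :=
  if (∃ i j, E i j ∧ ¬ CriticalNode E w i ∧ ¬ CriticalNode E w j) then
    sSup {x : ℝ | ∃ i j, E i j ∧ ¬ CriticalNode E w i ∧ ¬ CriticalNode E w j ∧ x = w i j}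
  else rate E w

/-- `d` is the greatest common divisor of the set `S` of naturals. -/
def IsGcdOf (d : ℕ) (S : Set ℕ) : Prop :=
  (∀ s ∈ S, d ∣ s) ∧ ∀ e : ℕ, (∀ s ∈ S, e ∣ s) → e ∣ d

/-- The set of lengths of nonempty closed walks in the graph. -/
def ClosedLengths (E : V → V → Prop) : Set ℕ :=
  {n | 0 < n ∧ ∃ p, IsClosedWalk E n p}

/-- The set of lengths of nonempty closed walks starting at `i`. -/
def ClosedLengthsAt (E : V → V → Prop) (i : V) : Set ℕ :=
  {n | 0 < n ∧ ∃ p, IsWalk E n p ∧ p 0 = i ∧ p n = i}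

/-- There is a (possibly empty) closed walk of length `n` starting at `i`. -/
def HasClosedWalkAt (E : V → V → Prop) (i : V) (n : ℕ) : Prop :=
  ∃ p, IsWalk E n p ∧ p 0 = i ∧ p n = i

/-- cd(G), the cab driver's diameter: the maximum length of simple walks. -/
noncomputable def cabDiameter (E : V → V → Prop) : ℕ :=
  sSup {n | ∃ p, IsSimpleWalk E n p}

/-- cr(G), the circumference: the maximum length of nonempty elementary closed walks. -/
noncomputable def circumference (E : V → V → Prop) : ℕ :=
  sSup {n | ∃ p, IsElemClosedWalk E n p}

/-- `g` is the girth of the graph: the minimum length of nonempty elementary closed walks. -/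
def IsGirth (E : V → V → Prop) (g : ℕ) : Prop :=
  IsLeast {n | ∃ p, IsElemClosedWalk E n p} g

/-- `ep` is the exploration penalty of a graph of cyclicity `c`: the least `m` such that
for every node `i` and every multiple `n` of `c` with `n ≥ m` there is a closed walk
of length `n` starting at `i`. -/
def IsEp (E : V → V → Prop) (c ep : ℕ) : Prop :=
  IsLeast {m | ∀ i : V, ∀ n : ℕ, c ∣ n → m ≤ n → HasClosedWalkAt E i n} ep

/-- `i` and `j` lie in the same strongly connected component of the graph. -/
def SameComp (E : V → V → Prop) (i j : V) : Prop :=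
  (∃ n p, IsWalk E n p ∧ p 0 = i ∧ p n = j) ∧ (∃ n p, IsWalk E n p ∧ p 0 = j ∧ p n = i)

/-- `m` is the exploration penalty of the strongly connected component of `k`
(a component of cyclicity `c`). -/
def IsCompEp (E : V → V → Prop) (k : V) (c m : ℕ) : Prop :=
  IsLeast {m' | ∀ i : V, SameComp E k i → ∀ n : ℕ, c ∣ n → m' ≤ n → HasClosedWalkAt E i n} m

/-- Max-plus matrix product. -/
noncomputable def mpMul {N : ℕ} (A B : Matrix (Fin N) (Fin N) (WithBot ℝ)) :
    Matrix (Fin N) (Fin N) (WithBot ℝ) :=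
  fun i j => Finset.univ.sup fun k => A i k + B k j

/-- Max-plus matrix power, `A^{⊗n}`. -/
noncomputable def mpPow {N : ℕ} (A : Matrix (Fin N) (Fin N) (WithBot ℝ)) :
    ℕ → Matrix (Fin N) (Fin N) (WithBot ℝ)
  | 0 => fun i j => if i = j then (0 : WithBot ℝ) else ⊥
  | n + 1 => mpMul A (mpPow A n)

/-- Max-plus matrix-vector product. -/
noncomputable def mpVec {N : ℕ} (A : Matrix (Fin N) (Fin N) (WithBot ℝ))
    (v : Fin N → WithBot ℝ) : Fin N → WithBot ℝ :=
  fun i => Finset.univ.sup fun j => A i j + v j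

/-- The edge relation of the weighted graph `G(A)`. -/
def mEdge {N : ℕ} (A : Matrix (Fin N) (Fin N) (WithBot ℝ)) : Fin N → Fin N → Prop :=
  fun i j => A i j ≠ ⊥

/-- The edge weights of the weighted graph `G(A)`. -/
noncomputable def mWeight {N : ℕ} (A : Matrix (Fin N) (Fin N) (WithBot ℝ)) :
    Fin N → Fin N → ℝ :=
  fun i j => WithBot.unbotD 0 (A i j)

/-- `A` is irreducible: `G(A)` is strongly connected and has at least one edge. -/
def MPIrreducible {N : ℕ} (A : Matrix (Fin N) (Fin N) (WithBot ℝ)) : Prop :=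
  StronglyConnected (mEdge A) ∧ NontrivialGraph (mEdge A)

/-- The linear max-plus system `x(n) = A^{⊗n} ⊗ v`. -/
noncomputable def mpSystem {N : ℕ} (A : Matrix (Fin N) (Fin N) (WithBot ℝ)) (v : Fin N → ℝ)
    (n : ℕ) : Fin N → WithBot ℝ :=
  mpVec (mpPow A n) fun j => (v j : WithBot ℝ)

/-- The set of indices from which the system `x_{A,v}` is periodic with increment
`p·ρ(A)`; its least element is the transient `n_{A,v}`. -/
noncomputable def SysTransientSet {N : ℕ} (A : Matrix (Fin N) (Fin N) (WithBot ℝ))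
    (v : Fin N → ℝ) : Set ℕ :=
  {n₀ | ∃ p : ℕ, 0 < p ∧ ∀ n, n₀ ≤ n → ∀ i,
    mpSystem A v (n + p) i
      = mpSystem A v n i + ((p * rate (mEdge A) (mWeight A) : ℝ) : WithBot ℝ)}

/-- The set of indices from which the powers of `A` are periodic with increment
`p·ρ(A)`; its least element is the transient `n_A`. -/
noncomputable def MatTransientSet {N : ℕ} (A : Matrix (Fin N) (Fin N) (WithBot ℝ)) : Set ℕ :=
  {n₀ | ∃ p : ℕ, 0 < p ∧ ∀ n, n₀ ≤ n → ∀ i j,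
    mpPow A (n + p) i j
      = mpPow A n i j + ((p * rate (mEdge A) (mWeight A) : ℝ) : WithBot ℝ)}

/-- `‖v‖ = max_i v_i − min_i v_i`. -/
noncomputable def vnorm {N : ℕ} (v : Fin N → ℝ) : ℝ :=
  sSup (Set.range v) - sInf (Set.range v)

/-!
A closed walk visiting some node twice splits into two shorter closed walks whose lengths
and weights add up, so its mean weight is a mediant of theirs and is at most the larger of
the two. By induction on the length, every nonempty closed walk is dominated by an
elementary one. Elementary closed walks have length at most `|V|`, so their means form a
finite set, and its maximum is the rate. That set is nonempty because an edge `i → j`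
followed by a walk back from `j` to `i` is a nonempty closed walk.
-/

theorem add_div_add_le_max {α : Type*} [Field α] [LinearOrder α] [IsStrictOrderedRing α]
    {a b x y : α} (hx : 0 < x) (hy : 0 < y) : (a + b) / (x + y) ≤ max (a / x) (b / y) := by
  have ha : a ≤ max (a / x) (b / y) * x := (div_le_iff₀ hx).mp (le_max_left _ _)
  have hb : b ≤ max (a / x) (b / y) * y := (div_le_iff₀ hy).mp (le_max_right _ _)
  rw [div_le_iff₀ (add_pos hx hy)]
  linarith

section Walks

variable {E : V → V → Prop} {w : V → V → ℝ} {m k n : ℕ} {p q : ℕ → V}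

def concatWalk (p : ℕ → V) (m : ℕ) (q : ℕ → V) : ℕ → V :=
  fun j => if j ≤ m then p j else q (j - m)

theorem concatWalk_of_le {j : ℕ} (hj : j ≤ m) : concatWalk p m q j = p j := if_pos hj

theorem concatWalk_add (h : p m = q 0) (j : ℕ) : concatWalk p m q (m + j) = q j := by
  unfold concatWalk
  split_ifs with hj
  · obtain rfl : j = 0 := by omega
    simpa using h
  · rw [Nat.add_sub_cancel_left]

theorem isWalk_congr (h : ∀ k ≤ n, p k = q k) : IsWalk E n p ↔ IsWalk E n q := by
  refine forall₂_congr fun k hk => ?_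
  rw [h k hk.le, h (k + 1) hk]

theorem walkWeight_congr (h : ∀ k ≤ n, p k = q k) : walkWeight w n p = walkWeight w n q :=
  Finset.sum_congr rfl fun k hk => by
    rw [Finset.mem_range] at hk
    rw [h k hk.le, h (k + 1) hk]

theorem isWalk_add : IsWalk E (m + k) p ↔ IsWalk E m p ∧ IsWalk E k (fun j => p (m + j)) := by
  refine ⟨fun h => ⟨fun j hj => h j (by omega), fun j hj => h (m + j) (by omega)⟩,
    fun ⟨h₁, h₂⟩ j hj => ?_⟩
  rcases lt_or_ge j m with hjm | hjm
  · exact h₁ j hjm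
  · obtain ⟨i, rfl⟩ := Nat.exists_eq_add_of_le hjm
    exact h₂ i (by omega)

theorem walkWeight_add :
    walkWeight w (m + k) p = walkWeight w m p + walkWeight w k (fun j => p (m + j)) :=
  Finset.sum_range_add _ m k

theorem isWalk_concatWalk (h : p m = q 0) :
    IsWalk E (m + k) (concatWalk p m q) ↔ IsWalk E m p ∧ IsWalk E k q := by
  rw [isWalk_add, isWalk_congr fun j hj => concatWalk_of_le hj]
  simp only [concatWalk_add h]

theorem walkWeight_concatWalk (h : p m = q 0) :
    walkWeight w (m + k) (concatWalk p m q) = walkWeight w m p + walkWeight w k q := by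
  rw [walkWeight_add, walkWeight_congr fun j hj => concatWalk_of_le hj]
  simp only [concatWalk_add h]

theorem exists_lt_lt_eq_of_not_injective
    (h : ¬ ∀ k l, k < n → l < n → p k = p l → k = l) : ∃ a b, a < b ∧ b < n ∧ p a = p b := by
  push Not at h
  obtain ⟨k, l, hk, hl, hkl, hne⟩ := h
  rcases hne.lt_or_gt with h | h
  · exact ⟨k, l, h, hl, hkl⟩
  · exact ⟨l, k, h, hk, hkl.symm⟩

/-- The two pieces are the loop `p a, …, p b` and `p` with that loop cut out. -/
theorem IsClosedWalk.exists_split (hw : IsClosedWalk E n p) {a b : ℕ} (hab : a < b)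
    (hbn : b < n) (hpab : p a = p b) :
    ∃ m k q₁ q₂, 0 < m ∧ 0 < k ∧ m + k = n ∧ IsClosedWalk E m q₁ ∧ IsClosedWalk E k q₂ ∧
      walkWeight w n p = walkWeight w m q₁ + walkWeight w k q₂ := by
  obtain ⟨d, rfl⟩ := Nat.exists_eq_add_of_le hab.le
  obtain ⟨r, rfl⟩ := Nat.exists_eq_add_of_le hbn.le
  obtain ⟨hwalk, hclosed⟩ := hw
  obtain ⟨hfront, htail⟩ := isWalk_add.mp hwalk
  obtain ⟨hhead, hloop⟩ := isWalk_add.mp hfront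
  have hjoin : p a = p (a + d + 0) := hpab
  refine ⟨d, a + r, fun j => p (a + j), concatWalk p a fun j => p (a + d + j),
    by omega, by omega, by omega, ⟨hloop, by simpa using hpab⟩,
    ⟨(isWalk_concatWalk hjoin).mpr ⟨hhead, htail⟩, ?_⟩, ?_⟩
  · rw [concatWalk_of_le (Nat.zero_le a), concatWalk_add hjoin, hclosed]
  · rw [walkWeight_concatWalk hjoin, walkWeight_add, walkWeight_add]
    ring

theorem IsClosedWalk.exists_isElemClosedWalk_div_le (hw : IsClosedWalk E n p) (hn : 0 < n) :
    ∃ m q, IsElemClosedWalk E m q ∧ walkWeight w n p / n ≤ walkWeight w m q / m := by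
  induction n using Nat.strong_induction_on generalizing p with
  | _ n ih =>
    by_cases hinj : ∀ k l, k < n → l < n → p k = p l → k = l
    · exact ⟨n, p, ⟨hn, hw, hinj⟩, le_rfl⟩
    obtain ⟨a, b, hab, hbn, hpab⟩ := exists_lt_lt_eq_of_not_injective hinj
    obtain ⟨m, k, q₁, q₂, hm, hk, rfl, hq₁, hq₂, hsplit⟩ := hw.exists_split (w := w) hab hbn hpab
    obtain ⟨m₁, r₁, he₁, hle₁⟩ := ih m (by omega) hq₁ hm
    obtain ⟨m₂, r₂, he₂, hle₂⟩ := ih k (by omega) hq₂ hk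
    have hmean : walkWeight w (m + k) p / ↑(m + k)
        ≤ max (walkWeight w m₁ r₁ / m₁) (walkWeight w m₂ r₂ / m₂) := calc
      _ = (walkWeight w m q₁ + walkWeight w k q₂) / ((m : ℝ) + k) := by rw [hsplit, Nat.cast_add]
      _ ≤ max (walkWeight w m q₁ / m) (walkWeight w k q₂ / k) :=
        add_div_add_le_max (by exact_mod_cast hm) (by exact_mod_cast hk)
      _ ≤ _ := max_le_max hle₁ hle₂
    rcases max_choice (walkWeight w m₁ r₁ / m₁) (walkWeight w m₂ r₂ / m₂) with h | h
    · exact ⟨m₁, r₁, he₁, h ▸ hmean⟩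
    · exact ⟨m₂, r₂, he₂, h ▸ hmean⟩

theorem IsElemClosedWalk.length_le_card [Finite V] (h : IsElemClosedWalk E n p) :
    n ≤ Nat.card V := by
  obtain ⟨-, -, hinj⟩ := h
  simpa using Nat.card_le_card_of_injective (fun k : Fin n => p k)
    fun k l hkl => Fin.ext (hinj k l k.isLt l.isLt hkl)

variable (E w)

def elemMeans : Set ℝ := {x | ∃ n p, IsElemClosedWalk E n p ∧ x = walkWeight w n p / n}

theorem finite_elemMeans [Finite V] : (elemMeans E w).Finite := by
  set c := Nat.card V
  -- the mean of an elementary closed walk only depends on its first `c + 1` nodes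
  refine (Set.finite_range fun q : Fin (c + 1) × (Fin (c + 1) → V) =>
    walkWeight w q.1 (fun k => q.2 ⟨min k c, by omega⟩) / (q.1 : ℕ)).subset ?_
  rintro x ⟨n, p, hp, rfl⟩
  have hn : n ≤ c := hp.length_le_card
  refine ⟨(⟨n, by omega⟩, fun i => p i), ?_⟩
  dsimp only
  rw [walkWeight_congr fun k hk => by rw [min_eq_left (by omega)]]

theorem exists_closedWalk_of_stronglyConnected (hnt : NontrivialGraph E)
    (hsc : StronglyConnected E) : ∃ n p, 0 < n ∧ IsClosedWalk E n p := by
  obtain ⟨i, j, hij⟩ := hnt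
  obtain ⟨n, p, hp, hp0, hpn⟩ := hsc j i
  let edge : ℕ → V := fun k => if k = 0 then i else j
  have hjoin : edge 1 = p 0 := hp0.symm
  refine ⟨1 + n, concatWalk edge 1 p, by omega,
    (isWalk_concatWalk hjoin).mpr ⟨fun k hk => ?_, hp⟩, ?_⟩
  · obtain rfl : k = 0 := by omega
    exact hij
  · rw [concatWalk_of_le zero_le_one, concatWalk_add hjoin, hpn]
    rfl

end Walks

/-- For a nontrivial strongly connected edge-weighted graph, the rate
ρ(G) equals the maximum mean weight over nonempty elementary closed paths; in
particular an elementary critical closed path exists. -/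
theorem stmt_1 {V : Type*} [Fintype V] (E : V → V → Prop) (w : V → V → ℝ)
    (hnt : NontrivialGraph E) (hsc : StronglyConnected E) :
    (∀ n p, IsElemClosedWalk E n p → walkWeight w n p / n ≤ rate E w) ∧
    (∃ n p, IsElemClosedWalk E n p ∧ walkWeight w n p / n = rate E w) := by
  obtain ⟨n₀, p₀, hn₀, hp₀⟩ := exists_closedWalk_of_stronglyConnected E hnt hsc
  obtain ⟨m₀, q₀, he₀, -⟩ := hp₀.exists_isElemClosedWalk_div_le (w := w) hn₀
  obtain ⟨_, ⟨m, q, hq, rfl⟩, hmax⟩ := Set.exists_max_image (elemMeans E w) id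
    (finite_elemMeans E w) ⟨_, m₀, q₀, he₀, rfl⟩
  have hrate : rate E w = walkWeight w m q / m := by
    refine IsGreatest.csSup_eq ⟨⟨m, q, hq.1, hq.2.1, rfl⟩, ?_⟩
    rintro _ ⟨n, p, hn, hp, rfl⟩
    obtain ⟨m', q', he', hle⟩ := hp.exists_isElemClosedWalk_div_le (w := w) hn
    exact hle.trans (hmax _ ⟨m', q', he', rfl⟩)
  exact ⟨fun n p hp => hrate ▸ hmax _ ⟨n, p, hp, rfl⟩, m, q, hq, hrate.symm⟩

end Transients
end

section
/- Let G be a nontrivial strongly connected directed graph. For every pair of nodes i, j of G and every integer n ≥ ep(G) + c(G) + cd(G) − 1, there exists a path π from i to j such that n − ℓ(π) ∈ {0, 1, …, c(G)−1}. -/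
/-!
Join `i` to `j` by a simple path `π`, so `ℓ(π) ≤ cd(G)`, and put in front of it a closed path
at `i` whose length `t` is the largest multiple of `c(G)` not exceeding `n - ℓ(π)`. The bound on
`n` gives `n - ℓ(π) ≥ ep(G) + c(G) - 1`, hence `t ≥ ep(G)`, so that closed path exists.
-/

namespace Transients

variable {V : Type*}

variable {E : V → V → Prop}

/-- Follow `p` up to index `a`, then continue along `q` (meant for `p a = q 0`). -/
def walkAppend (p : ℕ → V) (a : ℕ) (q : ℕ → V) : ℕ → V :=
  fun k => if k ≤ a then p k else q (k - a)

@[simp]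
lemma walkAppend_zero (p : ℕ → V) (a : ℕ) (q : ℕ → V) : walkAppend p a q 0 = p 0 := by
  simp [walkAppend]

lemma walkAppend_add {p q : ℕ → V} {a : ℕ} (h : p a = q 0) (b : ℕ) :
    walkAppend p a q (a + b) = q b := by
  rcases Nat.eq_zero_or_pos b with rfl | hb
  · simpa [walkAppend] using h
  · simp [walkAppend, show ¬ a + b ≤ a by omega]

lemma IsWalk.mono {n m : ℕ} {p : ℕ → V} (hp : IsWalk E n p) (hm : m ≤ n) : IsWalk E m p :=
  fun k hk => hp k (by omega)

lemma IsWalk.shift {n l : ℕ} {p : ℕ → V} (hp : IsWalk E n p) :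
    IsWalk E (n - l) (fun t => p (l + t)) :=
  fun k hk => hp (l + k) (by omega)

lemma IsWalk.append {a b : ℕ} {p q : ℕ → V} (hp : IsWalk E a p) (hq : IsWalk E b q)
    (h : p a = q 0) : IsWalk E (a + b) (walkAppend p a q) := by
  intro k hk
  by_cases hka : k < a
  · simpa [walkAppend, hka.le, Nat.succ_le_of_lt hka] using hp k hka
  · obtain ⟨r, rfl⟩ := Nat.exists_eq_add_of_le (not_lt.mp hka)
    rw [walkAppend_add h, add_assoc, walkAppend_add h]
    exact hq r (by omega)

/-- Cutting out the closed subwalk between two visits `k < l` of the same node. -/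
lemma IsWalk.shortcut {n k l : ℕ} {p : ℕ → V} (hp : IsWalk E n p) (hkl : k < l) (hln : l ≤ n)
    (h : p k = p l) :
    IsWalk E (k + (n - l)) (walkAppend p k (fun t => p (l + t))) ∧
      walkAppend p k (fun t => p (l + t)) (k + (n - l)) = p n := by
  have h' : p k = p (l + 0) := h
  refine ⟨(hp.mono (by omega)).append hp.shift h', ?_⟩
  rw [walkAppend_add h', Nat.add_sub_cancel' hln]

lemma IsWalk.exists_isSimpleWalk {n : ℕ} {p : ℕ → V} (hp : IsWalk E n p) :
    ∃ m q, IsSimpleWalk E m q ∧ q 0 = p 0 ∧ q m = p n := by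
  induction n using Nat.strong_induction_on generalizing p with
  | _ n ih =>
    by_cases hinj : ∀ k l, k ≤ n → l ≤ n → p k = p l → k = l
    · exact ⟨n, p, ⟨hp, hinj⟩, rfl, rfl⟩
    push Not at hinj
    obtain ⟨k, l, hk, hl, heq, hne⟩ := hinj
    obtain ⟨k, l, hkl, hln, heq⟩ : ∃ k l, k < l ∧ l ≤ n ∧ p k = p l := by
      rcases lt_or_gt_of_ne hne with h | h
      · exact ⟨k, l, h, hl, heq⟩
      · exact ⟨l, k, h, hk, heq.symm⟩
    obtain ⟨hwalk, hend⟩ := hp.shortcut hkl hln heq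
    obtain ⟨m, q, hq, hq0, hqm⟩ := ih _ (by omega) hwalk
    exact ⟨m, q, hq, by rw [hq0, walkAppend_zero], by rw [hqm, hend]⟩

lemma IsSimpleWalk.length_lt_card [Fintype V] {m : ℕ} {p : ℕ → V} (hp : IsSimpleWalk E m p) :
    m < Fintype.card V := by
  have hinj : Function.Injective (fun k : Fin (m + 1) => p k) :=
    fun a b hab => Fin.ext (hp.2 a b (by omega) (by omega) hab)
  simpa using Fintype.card_le_of_injective _ hinj

lemma IsSimpleWalk.le_cabDiameter [Fintype V] {m : ℕ} {p : ℕ → V} (hp : IsSimpleWalk E m p) :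
    m ≤ cabDiameter E :=
  le_csSup ⟨Fintype.card V, fun _ ⟨_, hq⟩ => hq.length_lt_card.le⟩ ⟨p, hp⟩

lemma closedLengths_nonempty (hnt : NontrivialGraph E) (hsc : StronglyConnected E) :
    (ClosedLengths E).Nonempty := by
  obtain ⟨a, b, hab⟩ := hnt
  obtain ⟨k, q, hq, hq0, hqk⟩ := hsc b a
  let e : ℕ → V := fun t => if t = 0 then a else b
  have he : IsWalk E 1 e := fun t ht => by simpa [e, Nat.lt_one_iff.mp ht] using hab
  have hjoin : e 1 = q 0 := by simp [e, hq0]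
  refine ⟨1 + k, by omega, walkAppend e 1 q, he.append hq hjoin, ?_⟩
  rw [walkAppend_zero, walkAppend_add hjoin, hqk]
  rfl

/-- In a nontrivial strongly connected graph, for all nodes `i, j` and
every `n ≥ ep(G) + c(G) + cd(G) − 1` there is a path `π` from `i` to `j` with
`n − ℓ(π) ∈ {0, …, c(G)−1}`. (The condition `n ≥ ep + c + cd − 1` is stated as
`ep + c + cd ≤ n + 1` to avoid natural-number truncation.) -/
theorem stmt_15 {V : Type*} [Fintype V] (E : V → V → Prop)
    (hnt : NontrivialGraph E) (hsc : StronglyConnected E)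
    (c ep : ℕ) (hc : IsGcdOf c (ClosedLengths E)) (hep : IsEp E c ep)
    (i j : V) (n : ℕ) (hn : ep + c + cabDiameter E ≤ n + 1) :
    ∃ m q, IsWalk E m q ∧ q 0 = i ∧ q m = j ∧ m ≤ n ∧ n - m < c := by
  obtain ⟨s, hs⟩ := closedLengths_nonempty hnt hsc
  have hc0 : 0 < c := Nat.pos_of_dvd_of_pos (hc.1 s hs) hs.1
  obtain ⟨k, p₀, hp₀, rfl, rfl⟩ := hsc i j
  obtain ⟨ℓ, p, hp, hpi, hpj⟩ := hp₀.exists_isSimpleWalk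
  have hℓ := hp.le_cabDiameter
  have hmod := Nat.mod_lt (n - ℓ) hc0
  have hmod_le := Nat.mod_le (n - ℓ) c
  set t := n - ℓ - (n - ℓ) % c
  obtain ⟨r, hr, hr0, hrt⟩ := hep.1 (p₀ 0) t (Nat.dvd_sub_mod _) (by omega)
  have hjoin : r t = p 0 := by rw [hrt, hpi]
  refine ⟨t + ℓ, walkAppend r t p, hr.append hp.1 hjoin, by rw [walkAppend_zero, hr0], ?_,
    by omega, by omega⟩
  rw [walkAppend_add hjoin, hpj]

end Transients
end
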